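/- arXiv:1301.5568 — 4 statements merged into one kernel-verified Lean document; each statement's English description precedes it below -/
import Mathlib

section
/- Let (S_t)_{t=0}^T be a nonnegative martingale with S₀ = 1 such that E[S_T log S_T] < ∞. Then E[max_{0≤t≤T} S_t] ≤ (e/(e−1))·(E[S_T log S_T] + 1). -/
/-!
Write `M = max_{t ≤ T} S_t ≥ 1`. Doob's maximal inequality gives the weak-type bound
`t · P(M ≥ t) ≤ E[S_T; M ≥ t]`, and the layer-cake formula turns it into
`E M ≤ 1 + ∫_1^∞ t⁻¹ E[S_T; M ≥ t] dt = 1 + E[S_T log M]`.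
Young's inequality `a log b ≤ a log a + b / e` then bounds `E[S_T log M]` by
`E[S_T log S_T] + E M / e`, and solving for `E M` gives the constant `e / (e - 1)`.
-/

open MeasureTheory Real Set
open scoped ENNReal

lemma lintegral_Ioc_one_inv_ofReal {b : ℝ} (hb : 0 ≤ b) :
    ∫⁻ t in Ioc 1 b, (ENNReal.ofReal t)⁻¹ = ENNReal.ofReal (log b) := by
  rcases lt_or_ge b 1 with hb1 | hb1
  · rw [Ioc_eq_empty (not_lt.2 hb1.le), Measure.restrict_empty, lintegral_zero_measure,
      ENNReal.ofReal_of_nonpos (log_nonpos hb hb1.le)]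
  have hpos : ∀ t ∈ Ioc (1 : ℝ) b, 0 < t := fun t ht => one_pos.trans ht.1
  have hint : IntegrableOn (fun t : ℝ => t⁻¹) (Ioc 1 b) :=
    ((continuousOn_inv₀.mono fun t ht => (one_pos.trans_le ht.1).ne').integrableOn_Icc).mono_set
      Ioc_subset_Icc_self
  rw [setLIntegral_congr_fun (g := fun t => ENNReal.ofReal t⁻¹) measurableSet_Ioc
      fun t ht => (ENNReal.ofReal_inv_of_pos (hpos t ht)).symm,
    ← ofReal_integral_eq_lintegral_ofReal hint
      ((ae_restrict_mem measurableSet_Ioc).mono fun t ht => (inv_pos.2 (hpos t ht)).le),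
    ← intervalIntegral.integral_of_le hb1, integral_inv_of_pos one_pos (one_pos.trans_le hb1),
    div_one]

lemma mul_log_le_mul_log_add_div_exp {a b : ℝ} (ha : 0 ≤ a) (hb : 0 < b) :
    a * log b ≤ a * log a + b / exp 1 := by
  rcases ha.eq_or_lt with rfl | ha
  · simp only [zero_mul, zero_add]
    positivity
  -- `log x ≤ x - 1` at `x = b / (a e)`
  have hlog := log_le_sub_one_of_pos (show 0 < b / (a * exp 1) by positivity)
  rw [log_div hb.ne' (by positivity), log_mul ha.ne' (exp_pos 1).ne', log_exp] at hlog
  have hcancel : a * (b / (a * exp 1)) = b / exp 1 := by field_simp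
  nlinarith

section

variable {Ω : Type*} {m : MeasurableSpace Ω} {μ : Measure Ω}

lemma integrable_finset_sup' {ι β : Type*} [NormedAddCommGroup β] [Lattice β] [HasSolidNorm β]
    [IsOrderedAddMonoid β] {s : Finset ι} (hs : s.Nonempty) {f : ι → Ω → β}
    (hf : ∀ i ∈ s, Integrable (f i) μ) :
    Integrable (fun ω => s.sup' hs fun i => f i ω) μ := by
  rw [show (fun ω => s.sup' hs fun i => f i ω) = s.sup' hs f from
    funext fun ω => (Finset.sup'_apply hs f ω).symm]
  exact Finset.sup'_induction (p := (Integrable · μ)) hs f (fun _ hg _ hh => hg.sup hh) hf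

lemma MeasureTheory.Submartingale.ofReal_mul_measure_le_setLIntegral [IsFiniteMeasure μ]
    {ℱ : Filtration ℕ m} {f : ℕ → Ω → ℝ} (hf : Submartingale f ℱ μ) (hnonneg : 0 ≤ f) (n : ℕ)
    {t : ℝ} (ht : 0 ≤ t) :
    ENNReal.ofReal t *
        μ {ω | t ≤ (Finset.range (n + 1)).sup' Finset.nonempty_range_add_one fun k => f k ω} ≤
      ∫⁻ ω in {ω | t ≤ (Finset.range (n + 1)).sup' Finset.nonempty_range_add_one fun k => f k ω},
        ENNReal.ofReal (f n ω) ∂μ := by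
  have hmax := maximal_ineq hf hnonneg (ε := t.toNNReal) n
  rwa [Real.coe_toNNReal t ht, ofReal_integral_eq_lintegral_ofReal (hf.integrable n).integrableOn
    (ae_of_all _ fun ω => hnonneg n ω)] at hmax

lemma lintegral_Ioi_one_inv_mul_setLIntegral [SFinite μ] {X Y : Ω → ℝ} (hX : Measurable X)
    (hX0 : 0 ≤ X) (hY : Measurable Y) (hY0 : 0 ≤ Y) :
    ∫⁻ t in Ioi 1, (ENNReal.ofReal t)⁻¹ * ∫⁻ ω in {ω | t ≤ X ω}, ENNReal.ofReal (Y ω) ∂μ =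
      ∫⁻ ω, ENNReal.ofReal (Y ω * log (X ω)) ∂μ := by
  set F : ℝ × Ω → ℝ≥0∞ := {p | p.1 ≤ X p.2}.indicator
    fun p => (ENNReal.ofReal p.1)⁻¹ * ENNReal.ofReal (Y p.2)
  have hF : Measurable F :=
    (measurable_fst.ennreal_ofReal.inv.mul (hY.comp measurable_snd).ennreal_ofReal).indicator
      (measurableSet_le measurable_fst (hX.comp measurable_snd))
  calc _ = ∫⁻ t in Ioi 1, ∫⁻ ω, F (t, ω) ∂μ := by
        refine lintegral_congr fun t => ?_
        rw [← lintegral_const_mul _ hY.ennreal_ofReal,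
          ← lintegral_indicator (measurableSet_le measurable_const hX)]
        rfl
    _ = ∫⁻ ω, (∫⁻ t in Ioi 1, F (t, ω)) ∂μ :=
        lintegral_lintegral_swap (f := fun t ω => F (t, ω)) hF.aemeasurable
    _ = _ := by
        refine lintegral_congr fun ω => ?_
        change ∫⁻ t in Ioi 1, (Iic (X ω)).indicator
          (fun t => (ENNReal.ofReal t)⁻¹ * ENNReal.ofReal (Y ω)) t = _
        rw [lintegral_indicator measurableSet_Iic, Measure.restrict_restrict measurableSet_Iic,
          inter_comm, Ioi_inter_Iic, lintegral_mul_const' _ _ ENNReal.ofReal_ne_top,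
          lintegral_Ioc_one_inv_ofReal (hX0 ω), ENNReal.ofReal_mul (hY0 ω), mul_comm]

lemma lintegral_ofReal_le_one_add_lintegral_mul_log [IsProbabilityMeasure μ] {X Y : Ω → ℝ}
    (hX : Measurable X) (hX0 : 0 ≤ X) (hY : Measurable Y) (hY0 : 0 ≤ Y)
    (hweak : ∀ t, 1 < t → ENNReal.ofReal t * μ {ω | t ≤ X ω} ≤
      ∫⁻ ω in {ω | t ≤ X ω}, ENNReal.ofReal (Y ω) ∂μ) :
    ∫⁻ ω, ENNReal.ofReal (X ω) ∂μ ≤ 1 + ∫⁻ ω, ENNReal.ofReal (Y ω * log (X ω)) ∂μ := by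
  rw [lintegral_eq_lintegral_meas_lt μ (ae_of_all _ hX0) hX.aemeasurable,
    ← Ioc_union_Ioi_eq_Ioi zero_le_one,
    lintegral_union measurableSet_Ioi (Ioc_disjoint_Ioi le_rfl),
    ← lintegral_Ioi_one_inv_mul_setLIntegral hX hX0 hY hY0]
  gcongr ?_ + ?_
  · calc _ ≤ ∫⁻ _ in Ioc (0 : ℝ) 1, 1 := lintegral_mono fun _ => prob_le_one
      _ = 1 := by simp
  · refine setLIntegral_mono' measurableSet_Ioi fun t (ht : 1 < t) => ?_
    have ht0 : ENNReal.ofReal t ≠ 0 := (ENNReal.ofReal_pos.2 (one_pos.trans ht)).ne'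
    calc μ {ω | t < X ω} ≤ μ {ω | t ≤ X ω} := measure_mono fun ω (hω : t < X ω) => hω.le
      _ ≤ _ := (ENNReal.mul_le_iff_le_inv ht0 ENNReal.ofReal_ne_top).1 (hweak t ht)

theorem integral_le_exp_div_exp_sub_one_mul_of_weakType [IsProbabilityMeasure μ] {X Y : Ω → ℝ}
    (hX : Integrable X μ) (hXm : Measurable X) (hX1 : 1 ≤ X) (hYm : Measurable Y) (hY0 : 0 ≤ Y)
    (hYlogY : Integrable (fun ω => Y ω * log (Y ω)) μ)
    (hweak : ∀ t, 1 < t → ENNReal.ofReal t * μ {ω | t ≤ X ω} ≤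
      ∫⁻ ω in {ω | t ≤ X ω}, ENNReal.ofReal (Y ω) ∂μ) :
    ∫ ω, X ω ∂μ ≤ exp 1 / (exp 1 - 1) * ((∫ ω, Y ω * log (Y ω) ∂μ) + 1) := by
  have hX0 : 0 ≤ X := fun ω => zero_le_one.trans (hX1 ω)
  have hYlogX0 : 0 ≤ fun ω => Y ω * log (X ω) := fun ω => mul_nonneg (hY0 ω) (log_nonneg (hX1 ω))
  have hyoung : ∀ ω, Y ω * log (X ω) ≤ Y ω * log (Y ω) + X ω / exp 1 := fun ω =>
    mul_log_le_mul_log_add_div_exp (hY0 ω) (one_pos.trans_le (hX1 ω))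
  have hYlogX : Integrable (fun ω => Y ω * log (X ω)) μ :=
    (hYlogY.add (hX.div_const _)).mono' (hYm.mul (measurable_log.comp hXm)).aestronglyMeasurable
      (ae_of_all _ fun ω => by rw [norm_of_nonneg (hYlogX0 ω)]; exact hyoung ω)
  have hlayer : ∫ ω, X ω ∂μ ≤ 1 + ∫ ω, Y ω * log (X ω) ∂μ := by
    have hYlogX_int0 : 0 ≤ ∫ ω, Y ω * log (X ω) ∂μ := integral_nonneg hYlogX0
    have h := lintegral_ofReal_le_one_add_lintegral_mul_log hXm hX0 hYm hY0 hweak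
    rw [← ofReal_integral_eq_lintegral_ofReal hX (ae_of_all _ hX0),
      ← ofReal_integral_eq_lintegral_ofReal hYlogX (ae_of_all _ hYlogX0), ← ENNReal.ofReal_one,
      ← ENNReal.ofReal_add zero_le_one hYlogX_int0] at h
    exact (ENNReal.ofReal_le_ofReal_iff (by positivity)).1 h
  have hyoung_int : ∫ ω, Y ω * log (X ω) ∂μ ≤
      (∫ ω, Y ω * log (Y ω) ∂μ) + (∫ ω, X ω ∂μ) / exp 1 := by
    calc _ ≤ ∫ ω, (Y ω * log (Y ω) + X ω / exp 1) ∂μ :=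
          integral_mono hYlogX (hYlogY.add (hX.div_const _)) hyoung
      _ = _ := by rw [integral_add hYlogY (hX.div_const _), integral_div]
  have he : 1 < exp 1 := one_lt_exp_iff.2 one_pos
  have hcancel : (∫ ω, X ω ∂μ) / exp 1 * exp 1 = ∫ ω, X ω ∂μ := div_mul_cancel₀ _ (exp_pos 1).ne'
  rw [div_mul_eq_mul_div, le_div_iff₀ (sub_pos.2 he)]
  nlinarith

end

theorem stmt2 {Ω : Type*} {m : MeasurableSpace Ω} {μ : Measure Ω} [IsProbabilityMeasure μ]
    (ℱ : Filtration ℕ m) (T : ℕ) (S : ℕ → Ω → ℝ)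
    (hmart : Martingale S ℱ μ)
    (hpos : ∀ t ω, 0 ≤ S t ω) (h0 : ∀ ω, S 0 ω = 1)
    (hint : Integrable (fun ω => S T ω * Real.log (S T ω)) μ) :
    (∫ ω, (Finset.range (T + 1)).sup' Finset.nonempty_range_add_one (fun t => S t ω) ∂μ)
      ≤ Real.exp 1 / (Real.exp 1 - 1) * ((∫ ω, S T ω * Real.log (S T ω) ∂μ) + 1) := by
  have hSm : ∀ n, Measurable (S n) := fun n => (hmart.stronglyMeasurable n).measurable.le (ℱ.le n)
  have hmax_one : ∀ ω, 1 ≤ (Finset.range (T + 1)).sup' Finset.nonempty_range_add_one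
      (fun t => S t ω) := fun ω =>
    h0 ω ▸ Finset.le_sup' (fun t => S t ω) (Finset.mem_range.2 T.succ_pos)
  exact integral_le_exp_div_exp_sub_one_mul_of_weakType
    (integrable_finset_sup' _ fun n _ => hmart.integrable n)
    (Finset.measurable_range_sup'' fun n _ => hSm n) hmax_one (hSm T) (hpos T) hint
    fun t ht => hmart.submartingale.ofReal_mul_measure_le_setLIntegral (fun n => hpos n) T
      (zero_le_one.trans ht.le)
end

section
/- Let μ be a probability measure on [0,∞) with finite first moment, and let f : [0,∞) → ℝ be convex and μ-integrable. Then there exists a convex function f̄ : [0,∞) → ℝ that is μ-integrable and satisfies |f̄(x)|/|f(x)| → ∞ as x → ∞ (equivalently: |f̄(x)|/(1+|f(x)|) → ∞). -/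
/-!
Let `l` be minus the secant line of `f` through `0` and `1`; convexity puts `f` above that line
on `[1, ∞)`, so `G x = max (f x) (l x) + x + 1` is a convex integrable function with
`1 + |f| ≤ G` eventually and `G → ∞`. It remains to compose `G` with a convex, increasing,
superlinear `Φ` that keeps `Φ ∘ G` integrable (de la Vallée-Poussin): by dominated convergence
`∫ (G - n)⁺ dμ → 0`, so there are thresholds `a k → ∞` with `∫ (G - a k)⁺ dμ ≤ 2⁻ᵏ`, and
`Φ t = ∑ₖ (t - a k)⁺` works, since `∫ Φ ∘ G dμ ≤ ∑ₖ 2⁻ᵏ` and `Φ t ≥ N t - ∑_{k<N} a k`.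
-/

open MeasureTheory Filter Topology Set

theorem convexOn_tsum {ι E : Type*} [AddCommGroup E] [Module ℝ E] {s : Set E}
    {f : ι → E → ℝ} (hs : Convex ℝ s) (hf : ∀ i, ConvexOn ℝ s (f i))
    (hsum : ∀ x ∈ s, Summable fun i => f i x) : ConvexOn ℝ s fun x => ∑' i, f i x := by
  refine ⟨hs, fun x hx y hy a b ha hb hab => ?_⟩
  simp only [smul_eq_mul]
  rw [← tsum_mul_left, ← tsum_mul_left,
    ← ((hsum x hx).mul_left a).tsum_add ((hsum y hy).mul_left b)]
  exact Summable.tsum_le_tsum (fun i => (hf i).2 hx hy ha hb hab) (hsum _ (hs hx hy ha hb hab))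
    (((hsum x hx).mul_left a).add ((hsum y hy).mul_left b))

theorem ConvexOn.comp_of_monotone {𝕜 E β γ : Type*} [Semiring 𝕜] [PartialOrder 𝕜]
    [AddCommMonoid E] [AddCommMonoid β] [PartialOrder β] [AddCommMonoid γ] [PartialOrder γ]
    [SMul 𝕜 E] [SMul 𝕜 β] [SMul 𝕜 γ] {s : Set E} {f : E → β} {g : β → γ}
    (hf : ConvexOn 𝕜 s f) (hg : ConvexOn 𝕜 univ g) (hg' : Monotone g) :
    ConvexOn 𝕜 s (g ∘ f) :=
  ⟨hf.1, fun _ hx _ hy _ _ ha hb hab =>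
    (hg' (hf.2 hx hy ha hb hab)).trans (hg.2 trivial trivial ha hb hab)⟩

theorem ConvexOn.secant_extension_le {𝕜 : Type*} [Field 𝕜] [LinearOrder 𝕜]
    [IsStrictOrderedRing 𝕜] {s : Set 𝕜} {f : 𝕜 → 𝕜} (hf : ConvexOn 𝕜 s f) {x y z : 𝕜}
    (hx : x ∈ s) (hz : z ∈ s) (hxy : x < y) (hyz : y ≤ z) :
    f y + (f y - f x) / (y - x) * (z - y) ≤ f z := by
  rcases hyz.eq_or_lt with rfl | hyz
  · simp
  have hslope := hf.slope_mono_adjacent hx hz hxy hyz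
  rw [le_div_iff₀ (sub_pos.2 hyz)] at hslope
  linarith

noncomputable def hingeSum (a : ℕ → ℝ) (t : ℝ) : ℝ := ∑' k, max (t - a k) 0

section HingeSum

variable {a : ℕ → ℝ}

theorem hingeSum_nonneg (t : ℝ) : 0 ≤ hingeSum a t :=
  tsum_nonneg fun _ => le_max_right _ _

theorem summable_hinge (ha : Tendsto a atTop atTop) (t : ℝ) :
    Summable fun k => max (t - a k) 0 := by
  have hzero : ∀ᶠ k in cofinite, max (t - a k) 0 = 0 := by
    rw [Nat.cofinite_eq_atTop]
    filter_upwards [ha.eventually_ge_atTop t] with k hk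
    simp [hk]
  exact summable_of_hasFiniteSupport hzero

theorem monotone_hingeSum (ha : Tendsto a atTop atTop) : Monotone (hingeSum a) :=
  fun _ _ hts => Summable.tsum_le_tsum (fun _ => max_le_max (by linarith) le_rfl)
    (summable_hinge ha _) (summable_hinge ha _)

theorem convexOn_hingeSum (ha : Tendsto a atTop atTop) : ConvexOn ℝ univ (hingeSum a) :=
  convexOn_tsum convex_univ
    (fun k => ((convexOn_id convex_univ).sub (concaveOn_const (a k) convex_univ)).sup
      (convexOn_const 0 convex_univ))
    fun t _ => summable_hinge ha t

theorem tendsto_hingeSum_div_atTop (ha : Tendsto a atTop atTop) :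
    Tendsto (fun t => hingeSum a t / t) atTop atTop := by
  refine tendsto_atTop.2 fun C => ?_
  obtain ⟨N, hN⟩ := exists_nat_ge (C + 1)
  set A := ∑ k ∈ Finset.range N, a k
  filter_upwards [eventually_ge_atTop 1, eventually_ge_atTop A] with t ht1 htA
  have hlower : N * t - A ≤ hingeSum a t := calc
    N * t - A = ∑ k ∈ Finset.range N, (t - a k) := by simp [A, Finset.sum_sub_distrib]
    _ ≤ ∑ k ∈ Finset.range N, max (t - a k) 0 := Finset.sum_le_sum fun _ _ => le_max_left _ _
    _ ≤ hingeSum a t :=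
      (summable_hinge ha t).sum_le_tsum _ fun _ _ => le_max_right _ _
  rw [le_div_iff₀ (by linarith)]
  nlinarith

theorem lintegral_ofReal_hingeSum_comp {α : Type*} [MeasurableSpace α] {μ : Measure α}
    {g : α → ℝ} (ha : Tendsto a atTop atTop) (hg : AEMeasurable g μ) :
    ∫⁻ x, ENNReal.ofReal (hingeSum a (g x)) ∂μ = ∑' k, ∫⁻ x, ENNReal.ofReal (g x - a k) ∂μ := by
  simp_rw [hingeSum, ENNReal.ofReal_tsum_of_nonneg (fun _ => le_max_right _ _)
    (summable_hinge ha _)]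
  simp only [ENNReal.ofReal_max, ENNReal.ofReal_zero, zero_le, sup_of_le_left]
  exact lintegral_tsum fun k => (hg.sub_const (a k)).ennreal_ofReal

end HingeSum

theorem MeasureTheory.Integrable.tendsto_lintegral_ofReal_sub_natCast {α : Type*}
    [MeasurableSpace α] {μ : Measure α} {g : α → ℝ} (hg : Integrable g μ) :
    Tendsto (fun n : ℕ => ∫⁻ x, ENNReal.ofReal (g x - n) ∂μ) atTop (𝓝 0) := by
  have hlim := tendsto_lintegral_of_dominated_convergence' (μ := μ) (f := 0)
    (fun x => ‖g x‖ₑ) (fun n => (hg.aemeasurable.sub_const (n : ℝ)).ennreal_ofReal)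
    (fun n => ae_of_all _ fun x => ?_) hg.2.ne (ae_of_all _ fun x => ?_)
  · simpa using hlim
  · show ENNReal.ofReal (g x - n) ≤ ‖g x‖ₑ
    rw [Real.enorm_eq_ofReal_abs]
    exact ENNReal.ofReal_le_ofReal (by linarith [le_abs_self (g x), n.cast_nonneg (α := ℝ)])
  · refine tendsto_const_nhds.congr' ?_
    filter_upwards [tendsto_natCast_atTop_atTop.eventually_ge_atTop (g x)] with n hn
    simp [ENNReal.ofReal_eq_zero.2 (sub_nonpos.2 hn)]

theorem MeasureTheory.Integrable.exists_superlinear_convexOn_integrable_comp {α : Type*}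
    [MeasurableSpace α] {μ : Measure α} {g : α → ℝ} (hg : Integrable g μ) :
    ∃ Φ : ℝ → ℝ, ConvexOn ℝ univ Φ ∧ Monotone Φ ∧ (∀ t, 0 ≤ Φ t) ∧
      Tendsto (fun t => Φ t / t) atTop atTop ∧ Integrable (Φ ∘ g) μ := by
  have hthreshold : ∀ k : ℕ, ∃ n : ℕ, k ≤ n ∧
      ∫⁻ x, ENNReal.ofReal (g x - n) ∂μ ≤ 2⁻¹ ^ k := fun k => by
    obtain ⟨N, hN⟩ := ENNReal.tendsto_atTop_zero.1 hg.tendsto_lintegral_ofReal_sub_natCast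
      (2⁻¹ ^ k) (ENNReal.pow_pos (by norm_num) k)
    exact ⟨max k N, le_max_left _ _, hN _ (le_max_right _ _)⟩
  choose n hkn hn using hthreshold
  have ha : Tendsto (fun k => (n k : ℝ)) atTop atTop :=
    tendsto_natCast_atTop_atTop.comp (tendsto_atTop_mono hkn tendsto_id)
  refine ⟨hingeSum fun k => n k, convexOn_hingeSum ha, monotone_hingeSum ha,
    hingeSum_nonneg, tendsto_hingeSum_div_atTop ha,
    ((monotone_hingeSum ha).measurable.comp_aemeasurable hg.aemeasurable).aestronglyMeasurable,
    ?_⟩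
  refine (hasFiniteIntegral_iff_ofReal (ae_of_all _ fun _ => hingeSum_nonneg _)).2 ?_
  calc ∫⁻ x, ENNReal.ofReal (hingeSum (fun k => n k) (g x)) ∂μ
      = ∑' k, ∫⁻ x, ENNReal.ofReal (g x - n k) ∂μ :=
        lintegral_ofReal_hingeSum_comp ha hg.aemeasurable
    _ ≤ ∑' k : ℕ, 2⁻¹ ^ k := ENNReal.tsum_le_tsum hn
    _ < ⊤ := by
      rw [ENNReal.tsum_geometric, ENNReal.one_sub_inv_two, inv_inv]
      exact ENNReal.ofNat_lt_top

theorem ConvexOn.exists_convexOn_integrable_majorant {μ : Measure ℝ} [IsFiniteMeasure μ]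
    {f : ℝ → ℝ} (hf : ConvexOn ℝ (Ici 0) f) (hfi : Integrable f μ)
    (hmom : Integrable (fun x => x) μ) :
    ∃ G : ℝ → ℝ, ConvexOn ℝ (Ici 0) G ∧ Integrable G μ ∧ Tendsto G atTop atTop ∧
      ∀ᶠ x in atTop, 1 + |f x| ≤ G x := by
  set c := f 1 - f 0
  set l : ℝ → ℝ := fun x => -c * x + (c - f 1)
  have hneg_le : ∀ x, 1 ≤ x → -f x ≤ l x := fun x hx => by
    have := hf.secant_extension_le (x := 0) (y := 1) self_mem_Ici (le_trans zero_le_one hx)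
      zero_lt_one hx
    simp only [sub_zero, div_one] at this
    linarith
  have hlconv : ConvexOn ℝ (Ici 0) l :=
    ((LinearMap.mul ℝ ℝ (-c)).convexOn (convex_Ici 0)).add_const _
  set G : ℝ → ℝ := fun x => max (f x) (l x) + x + 1
  have hdom : ∀ᶠ x in atTop, 1 + |f x| + x ≤ G x := by
    filter_upwards [eventually_ge_atTop 1] with x hx
    have : |f x| ≤ max (f x) (l x) :=
      abs_le'.2 ⟨le_max_left _ _, (hneg_le x hx).trans (le_max_right _ _)⟩
    linarith
  refine ⟨G, ((hf.sup hlconv).add (convexOn_id (convex_Ici 0))).add_const 1,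
    ((hfi.sup ((hmom.const_mul (-c)).add (integrable_const _))).add hmom).add
      (integrable_const 1),
    tendsto_atTop_mono' _ (hdom.mono fun x hx => ?_) tendsto_id, ?_⟩
  · show x ≤ G x
    linarith [abs_nonneg (f x)]
  · filter_upwards [hdom, eventually_ge_atTop 0] with x hx hx0
    linarith

theorem stmt3_general (μ : Measure ℝ) [IsProbabilityMeasure μ]
    (hmom : Integrable (fun y => y) μ)
    (f : ℝ → ℝ) (hconv : ConvexOn ℝ (Set.Ici (0:ℝ)) f) (hint : Integrable f μ) :
    ∃ fbar : ℝ → ℝ, ConvexOn ℝ (Set.Ici (0:ℝ)) fbar ∧ Integrable fbar μ ∧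
      Tendsto (fun x => |fbar x| / (1 + |f x|)) atTop atTop := by
  obtain ⟨G, hGconv, hGint, hGtop, hfG⟩ := hconv.exists_convexOn_integrable_majorant hint hmom
  obtain ⟨Φ, hΦconv, hΦmono, hΦnonneg, hΦdiv, hΦG⟩ :=
    hGint.exists_superlinear_convexOn_integrable_comp
  refine ⟨Φ ∘ G, hGconv.comp_of_monotone hΦconv hΦmono, hΦG,
    tendsto_atTop_mono' _ ?_ (hΦdiv.comp hGtop)⟩
  filter_upwards [hfG] with x hx
  show Φ (G x) / G x ≤ |Φ (G x)| / (1 + |f x|)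
  rw [abs_of_nonneg (hΦnonneg _)]
  exact div_le_div_of_nonneg_left (hΦnonneg _) (by positivity) hx

theorem stmt3 (μ : Measure ℝ) [IsProbabilityMeasure μ] (hsupp : μ (Set.Iio 0) = 0)
    (hmom : Integrable (fun y => y) μ)
    (f : ℝ → ℝ) (hconv : ConvexOn ℝ (Set.Ici (0:ℝ)) f) (hint : Integrable f μ) :
    ∃ fbar : ℝ → ℝ, ConvexOn ℝ (Set.Ici (0:ℝ)) fbar ∧ Integrable fbar μ ∧
      Tendsto (fun x => |fbar x| / (1 + |f x|)) atTop atTop :=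
  stmt3_general μ hmom f hconv hint
end

section
/- Let ν be a probability measure on [0,∞) with finite first moment. Then there exist constants c ∈ ℝ, nonnegative reals α_n, and strikes K_n ↑ ∞ such that, with p_n = ∫_{K_n}^∞ (y − K_n) dν(y), one has Σ α_n = ∞ and Σ α_n p_n < ∞, and the function g₀(y) = Σ_{n=1}^∞ α_n((y−K_n)₊ − p_n) is convex, superlinear (g₀(y)/y → ∞), and ν-integrable. Moreover, for any prescribed convex superlinear ḡ ∈ L¹(ν) one can choose the α_n, K_n, c so that ḡ(y) ≤ c + Σ_n α_n (y − K_n)₊ for all y ≥ 0. -/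
/-!
Choose strikes `0 = K₀ < K₁ < ⋯ → ∞`, let `sₙ` be the slope of the chord of `ḡ` over
`[Kₙ, Kₙ₊₁]` and `Aₙ = max sₙ 0`. With `αₙ = Aₙ - Aₙ₋₁` the sum `Σ αₙ (y - Kₙ)₊` is piecewise
linear with slope `Aₙ` on `[Kₙ, Kₙ₊₁]`, hence dominates `ḡ - ḡ 0` by convexity, and
`Σ αₙ = lim Aₙ = ∞` by superlinearity of `ḡ`.

The strikes are chosen so that consecutive call prices halve, `pₙ = 2 pₙ₊₁` (unless `ν` has
bounded support, where `Kₙ = n` and the prices vanish eventually). Then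
`Σ αₙ pₙ = 2 ∫ Σ αₙ (y - Kₙ₊₁)₊ dν`, and the shifted sum has slope `Aₙ ≤ sₙ - s₀ + s₀⁺` on
`[Kₙ₊₁, Kₙ₊₂]`, where `ḡ` has slope at least `sₙ`; so it is bounded by the integrable function
`(ḡ y - ḡ 0 - s₀ y)₊ + s₀⁺ y`.
-/

open MeasureTheory Filter Set Topology

lemma exists_gt_eq_half {p : ℝ → ℝ} (hc : Continuous p) (hpos : ∀ k, 0 < p k)
    (hlim : Tendsto p atTop (𝓝 0)) (x : ℝ) : ∃ x' > x, p x' = p x / 2 := by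
  obtain ⟨k, hk, hxk⟩ := ((hlim.eventually_lt_const (half_pos (hpos x))).and
    (eventually_ge_atTop x)).exists
  obtain ⟨x', ⟨hxx', -⟩, hx'⟩ := intermediate_value_Icc' hxk hc.continuousOn
    ⟨hk.le, by linarith [hpos x]⟩
  refine ⟨x', lt_of_le_of_ne hxx' ?_, hx'⟩
  rintro rfl
  linarith [hpos x]

lemma exists_strictMono_halving {p : ℝ → ℝ} (hc : Continuous p) (hanti : Antitone p)
    (hpos : ∀ k, 0 < p k) (hlim : Tendsto p atTop (𝓝 0)) :
    ∃ K : ℕ → ℝ, K 0 = 0 ∧ StrictMono K ∧ Tendsto K atTop atTop ∧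
      ∀ n, p (K n) = 2 * p (K (n + 1)) := by
  choose next hnext_gt hnext using exists_gt_eq_half hc hpos hlim
  set K : ℕ → ℝ := fun n => next^[n] 0
  have hsucc : ∀ n, K (n + 1) = next (K n) := fun n => Function.iterate_succ_apply' _ _ _
  have hhalf : ∀ n, p (K n) = 2 * p (K (n + 1)) := fun n => by rw [hsucc, hnext]; ring
  have hmono : StrictMono K := strictMono_nat_of_lt_succ fun n => hsucc n ▸ hnext_gt _
  refine ⟨K, rfl, hmono, tendsto_atTop_atTop_of_monotone' hmono.monotone ?_, hhalf⟩
  rintro ⟨X, hX⟩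
  have hgeom : ∀ n, p (K n) = p 0 * (1 / 2) ^ n := fun n => by
    induction n with
    | zero => simp [K]
    | succ n ih => rw [pow_succ, ← mul_assoc, ← ih, hhalf n]; ring
  have hzero : Tendsto (fun n => p (K n)) atTop (𝓝 0) := by
    simpa [hgeom] using (tendsto_pow_atTop_nhds_zero_of_lt_one (by norm_num : (0:ℝ) ≤ 1 / 2)
      (by norm_num)).const_mul (p 0)
  have : p X ≤ 0 := ge_of_tendsto' hzero fun n => hanti (hX (mem_range_self n))
  linarith [hpos X]

lemma le_of_sub_le_sub_on_grid {u v : ℝ → ℝ} {L : ℕ → ℝ} (hL : Monotone L) (hL0 : 0 ≤ L 0)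
    (hLtop : Tendsto L atTop atTop) (hinit : ∀ y, 0 ≤ y → y ≤ L 0 → u y ≤ v y)
    (hstep : ∀ m y, L m ≤ y → y ≤ L (m + 1) → u y - u (L m) ≤ v y - v (L m))
    {y : ℝ} (hy : 0 ≤ y) : u y ≤ v y := by
  have hgrid : ∀ m y, 0 ≤ y → y ≤ L m → u y ≤ v y := by
    intro m
    induction m with
    | zero => exact hinit
    | succ m ih =>
      intro y hy hym
      rcases le_total y (L m) with h | h
      · exact ih y hy h
      · linarith [ih (L m) (hL0.trans (hL m.zero_le)) le_rfl, hstep m y h hym]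
  obtain ⟨m, hm⟩ := (hLtop.eventually_ge_atTop y).exists
  exact hgrid m y hy hm

lemma tendsto_div_atTop_of_sub_le {f g : ℝ → ℝ} (hg : Tendsto (fun y => g y / y) atTop atTop)
    (C : ℝ) (hfg : ∀ y, 0 ≤ y → g y - C ≤ f y) : Tendsto (fun y => f y / y) atTop atTop := by
  have hC : Tendsto (fun y => g y / y - C / y) atTop atTop := by
    simpa [sub_eq_add_neg] using
      hg.atTop_add (tendsto_const_nhds.div_atTop tendsto_id : Tendsto (fun y => C / y) _ _).neg
  refine tendsto_atTop_mono' atTop ?_ hC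
  filter_upwards [eventually_gt_atTop 0] with y hy
  rw [← sub_div]
  exact div_le_div_of_nonneg_right (hfg y hy.le) hy.le

section Slope

variable {s : Set ℝ} {g : ℝ → ℝ}

lemma sub_mul_slope (g : ℝ → ℝ) (a b : ℝ) : (b - a) * slope g a b = g b - g a := by
  simpa using sub_smul_slope g a b

lemma ConvexOn.le_add_slope_mul (hg : ConvexOn ℝ s g) {a b y : ℝ} (ha : a ∈ s) (hb : b ∈ s)
    (hay : a ≤ y) (hyb : y ≤ b) : g y ≤ g a + slope g a b * (y - a) := by
  rcases hay.eq_or_lt with rfl | hay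
  · simp
  have hy : y ∈ s := hg.1.ordConnected.out ha hb ⟨hay.le, hyb⟩
  have hslope : slope g a y ≤ slope g a b :=
    hg.slope_mono ha ⟨hy, hay.ne'⟩ ⟨hb, (hay.trans_le hyb).ne'⟩ hyb
  nlinarith [sub_mul_slope g a y]

lemma ConvexOn.add_slope_mul_le (hg : ConvexOn ℝ s g) {a b y : ℝ} (ha : a ∈ s) (hy : y ∈ s)
    (hab : a < b) (hby : b ≤ y) : g b + slope g a b * (y - b) ≤ g y := by
  have hb : b ∈ s := hg.1.ordConnected.out ha hy ⟨hab.le, hby⟩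
  rcases hby.eq_or_lt with rfl | hby
  · simp
  have hslope : slope g b a ≤ slope g b y :=
    hg.slope_mono hb ⟨ha, hab.ne⟩ ⟨hy, hby.ne'⟩ (hab.trans hby).le
  rw [slope_comm] at hslope
  nlinarith [sub_mul_slope g b y]

noncomputable def chordSlope (g : ℝ → ℝ) (K : ℕ → ℝ) (n : ℕ) : ℝ := slope g (K n) (K (n + 1))

lemma monotone_chordSlope (hg : ConvexOn ℝ s g) {K : ℕ → ℝ} (hKs : ∀ n, K n ∈ s)
    (hK : StrictMono K) : Monotone (chordSlope g K) := by
  refine monotone_nat_of_le_succ fun n => ?_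
  have h := hg.slope_mono (hKs (n + 1)) ⟨hKs n, (hK n.lt_succ_self).ne⟩
    ⟨hKs (n + 2), (hK (n + 1).lt_succ_self).ne'⟩ (hK.monotone (by omega))
  rwa [slope_comm] at h

end Slope

def increments (A : ℕ → ℝ) : ℕ → ℝ
  | 0 => A 0
  | n + 1 => A (n + 1) - A n

lemma sum_range_succ_increments (A : ℕ → ℝ) (N : ℕ) :
    ∑ n ∈ Finset.range (N + 1), increments A n = A N := by
  induction N with
  | zero => simp [increments]
  | succ N ih => rw [Finset.sum_range_succ, ih, increments]; ring

lemma increments_nonneg {A : ℕ → ℝ} (hA : Monotone A) (hA0 : 0 ≤ A 0) (n : ℕ) :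
    0 ≤ increments A n := by
  cases n with
  | zero => exact hA0
  | succ n => exact sub_nonneg.2 (hA n.le_succ)

lemma mem_Ici_zero_of_monotone {K : ℕ → ℝ} (hK : Monotone K) (hK0 : K 0 = 0) (n : ℕ) :
    K n ∈ Ici (0 : ℝ) :=
  hK0 ▸ hK n.zero_le

noncomputable def price (ν : Measure ℝ) (k : ℝ) : ℝ := ∫ y, max (y - k) 0 ∂ν

section Price

variable {ν : Measure ℝ}

lemma integrable_call [IsFiniteMeasure ν] (hmom : Integrable (fun y => y) ν) (k : ℝ) :
    Integrable (fun y => max (y - k) 0) ν :=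
  (hmom.sub (integrable_const k)).pos_part

lemma price_nonneg (k : ℝ) : 0 ≤ price ν k :=
  integral_nonneg fun _ => le_max_right _ _

lemma price_antitone [IsFiniteMeasure ν] (hmom : Integrable (fun y => y) ν) :
    Antitone (price ν) := fun k₁ k₂ hk =>
  integral_mono (integrable_call hmom k₂) (integrable_call hmom k₁) fun _ =>
    max_le_max (by linarith) le_rfl

lemma price_eq_zero_of_le [IsFiniteMeasure ν] (hmom : Integrable (fun y => y) ν) {M k : ℝ}
    (hM : price ν M ≤ 0) (hk : M ≤ k) : price ν k = 0 :=
  le_antisymm ((price_antitone hmom hk).trans hM) (price_nonneg k)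

lemma lipschitzWith_price [IsProbabilityMeasure ν] (hmom : Integrable (fun y => y) ν) :
    LipschitzWith 1 (price ν) := by
  refine LipschitzWith.of_dist_le_mul fun k₁ k₂ => ?_
  rw [NNReal.coe_one, one_mul, Real.dist_eq, Real.dist_eq, price, price,
    ← integral_sub (integrable_call hmom k₁) (integrable_call hmom k₂)]
  calc |∫ y, (max (y - k₁) 0 - max (y - k₂) 0) ∂ν|
      ≤ ∫ y, |max (y - k₁) 0 - max (y - k₂) 0| ∂ν := abs_integral_le_integral_abs
    _ ≤ ∫ _, |k₁ - k₂| ∂ν := by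
        refine integral_mono ((integrable_call hmom k₁).sub (integrable_call hmom k₂)).abs
          (integrable_const _) fun y => ?_
        simpa [abs_sub_comm] using abs_max_sub_max_le_abs (y - k₁) (y - k₂) 0
    _ = |k₁ - k₂| := by simp

lemma tendsto_price_atTop [IsFiniteMeasure ν] (hmom : Integrable (fun y => y) ν) :
    Tendsto (price ν) atTop (𝓝 0) := by
  have hlim := tendsto_integral_filter_of_dominated_convergence (μ := ν) (l := atTop)
    (F := fun k y => max (y - k) 0) (f := fun _ => 0) (fun y => max y 0)
    (Eventually.of_forall fun k => (integrable_call hmom k).aestronglyMeasurable)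
    ((eventually_ge_atTop 0).mono fun k hk => Eventually.of_forall fun y => by
      rw [Real.norm_of_nonneg (le_max_right _ _)]
      exact max_le_max (by linarith) le_rfl)
    hmom.pos_part
    (Eventually.of_forall fun y => tendsto_const_nhds.congr'
      ((eventually_ge_atTop y).mono fun k hk => (max_eq_right (by linarith)).symm))
  rwa [integral_zero] at hlim

end Price

noncomputable def callSum (α K : ℕ → ℝ) (y : ℝ) : ℝ := ∑' n, α n * max (y - K n) 0

section CallSum

variable {α K : ℕ → ℝ}

lemma callSum_eq_sum (hK : Monotone K) {N : ℕ} {y : ℝ} (hy : y ≤ K N) :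
    callSum α K y = ∑ n ∈ Finset.range N, α n * max (y - K n) 0 :=
  tsum_eq_sum fun n hn => by
    rw [max_eq_right (by linarith [hK (not_lt.1 (Finset.mem_range.not.1 hn))]), mul_zero]

lemma summable_call (hK : Monotone K) (hKtop : Tendsto K atTop atTop) (y : ℝ) :
    Summable fun n => α n * max (y - K n) 0 := by
  obtain ⟨N, hN⟩ := (hKtop.eventually_ge_atTop y).exists
  refine summable_of_ne_finset_zero (s := Finset.range N) fun n hn => ?_
  rw [max_eq_right (by linarith [hK (not_lt.1 (Finset.mem_range.not.1 hn))]), mul_zero]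

lemma callSum_eq_zero_of_le (hK : Monotone K) {y : ℝ} (hy : y ≤ K 0) : callSum α K y = 0 := by
  simp [callSum_eq_sum hK hy]

lemma callSum_nonneg (hα : ∀ n, 0 ≤ α n) (y : ℝ) : 0 ≤ callSum α K y :=
  tsum_nonneg fun n => mul_nonneg (hα n) (le_max_right _ _)

lemma callSum_sub_callSum (hK : Monotone K) {m : ℕ} {y : ℝ} (hmy : K m ≤ y)
    (hym : y ≤ K (m + 1)) :
    callSum α K y - callSum α K (K m) = (∑ n ∈ Finset.range (m + 1), α n) * (y - K m) := by
  rw [callSum_eq_sum hK hym, callSum_eq_sum hK (hK m.le_succ), Finset.sum_mul,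
    ← Finset.sum_sub_distrib]
  refine Finset.sum_congr rfl fun n hn => ?_
  have hn : K n ≤ K m := hK (Nat.lt_succ_iff.1 (Finset.mem_range.1 hn))
  rw [max_eq_left (by linarith), max_eq_left (by linarith)]
  ring

lemma monotone_callSum (hα : ∀ n, 0 ≤ α n) (hK : Monotone K) (hKtop : Tendsto K atTop atTop) :
    Monotone (callSum α K) := fun _ _ hxy =>
  Summable.tsum_le_tsum (fun n => mul_le_mul_of_nonneg_left (max_le_max (by linarith) le_rfl)
    (hα n)) (summable_call hK hKtop _) (summable_call hK hKtop _)

lemma convexOn_callSum (hα : ∀ n, 0 ≤ α n) (hK : Monotone K) (hKtop : Tendsto K atTop atTop) :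
    ConvexOn ℝ univ (callSum α K) := by
  refine ⟨convex_univ, fun x _ y _ a b ha hb hab => ?_⟩
  simp only [smul_eq_mul, callSum]
  rw [← tsum_mul_left, ← tsum_mul_left, ← Summable.tsum_add
    ((summable_call hK hKtop x).mul_left a) ((summable_call hK hKtop y).mul_left b)]
  refine Summable.tsum_le_tsum (fun n => ?_) (summable_call hK hKtop _)
    (((summable_call hK hKtop x).mul_left a).add ((summable_call hK hKtop y).mul_left b))
  have hcall : max (a * x + b * y - K n) 0 ≤ a * max (x - K n) 0 + b * max (y - K n) 0 := by
    refine max_le ?_ (by positivity)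
    have : a * x + b * y - K n = a * (x - K n) + b * (y - K n) := by
      linear_combination K n * hab
    rw [this]
    gcongr <;> exact le_max_left _ _
  nlinarith [mul_le_mul_of_nonneg_left hcall (hα n)]

lemma callSum_sub_tsum (hK : Monotone K) (hKtop : Tendsto K atTop atTop) {p : ℕ → ℝ}
    (hp : Summable fun n => α n * p n) (y : ℝ) :
    ∑' n, α n * (max (y - K n) 0 - p n) = callSum α K y - ∑' n, α n * p n := by
  simp_rw [mul_sub]
  exact (summable_call hK hKtop y).tsum_sub hp

end CallSum

section Integrability

variable {ν : Measure ℝ} [IsFiniteMeasure ν] {α K : ℕ → ℝ}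

lemma lintegral_callSum (hmom : Integrable (fun y => y) ν) (hα : ∀ n, 0 ≤ α n)
    (hK : Monotone K) (hKtop : Tendsto K atTop atTop) :
    ∫⁻ y, ENNReal.ofReal (callSum α K y) ∂ν = ∑' n, ENNReal.ofReal (α n * price ν (K n)) := by
  have hterm : ∀ n y, 0 ≤ α n * max (y - K n) 0 := fun n y => mul_nonneg (hα n) (le_max_right _ _)
  calc ∫⁻ y, ENNReal.ofReal (callSum α K y) ∂ν
      = ∫⁻ y, ∑' n, ENNReal.ofReal (α n * max (y - K n) 0) ∂ν :=
        lintegral_congr fun y =>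
          ENNReal.ofReal_tsum_of_nonneg (fun n => hterm n y) (summable_call hK hKtop y)
    _ = ∑' n, ∫⁻ y, ENNReal.ofReal (α n * max (y - K n) 0) ∂ν :=
        lintegral_tsum fun n =>
          ((integrable_call hmom (K n)).const_mul (α n)).aemeasurable.ennreal_ofReal
    _ = ∑' n, ENNReal.ofReal (α n * price ν (K n)) := tsum_congr fun n => by
        rw [← ofReal_integral_eq_lintegral_ofReal ((integrable_call hmom (K n)).const_mul (α n))
          (Eventually.of_forall (hterm n)), integral_const_mul, price]

lemma integrable_callSum_iff (hmom : Integrable (fun y => y) ν) (hα : ∀ n, 0 ≤ α n)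
    (hK : Monotone K) (hKtop : Tendsto K atTop atTop) :
    Integrable (callSum α K) ν ↔ Summable fun n => α n * price ν (K n) := by
  have hnonneg : 0 ≤ᵐ[ν] callSum α K := Eventually.of_forall (callSum_nonneg hα)
  rw [Integrable, hasFiniteIntegral_iff_ofReal hnonneg, lintegral_callSum hmom hα hK hKtop]
  constructor
  · rintro ⟨-, hfin⟩
    exact (ENNReal.summable_toReal hfin.ne).congr fun n =>
      ENNReal.toReal_ofReal (mul_nonneg (hα n) (price_nonneg _))
  · exact fun hs => ⟨(monotone_callSum hα hK hKtop).measurable.aestronglyMeasurable,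
      hs.tsum_ofReal_lt_top⟩

end Integrability

noncomputable def callWeight (g : ℝ → ℝ) (K : ℕ → ℝ) : ℕ → ℝ :=
  increments fun n => max (chordSlope g K n) 0

section CallWeight

variable {g : ℝ → ℝ} {K : ℕ → ℝ}

lemma callWeight_nonneg {s : Set ℝ} (hg : ConvexOn ℝ s g) (hKs : ∀ n, K n ∈ s)
    (hK : StrictMono K) (n : ℕ) : 0 ≤ callWeight g K n :=
  increments_nonneg (fun _ _ h => max_le_max (monotone_chordSlope hg hKs hK h) le_rfl)
    (le_max_right _ _) n

lemma le_add_callSum_callWeight (hg : ConvexOn ℝ (Ici 0) g) (hK0 : K 0 = 0) (hK : StrictMono K)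
    (hKtop : Tendsto K atTop atTop) {y : ℝ} (hy : 0 ≤ y) :
    g y ≤ g 0 + callSum (callWeight g K) K y := by
  have hKs := mem_Ici_zero_of_monotone hK.monotone hK0
  refine le_of_sub_le_sub_on_grid (u := g) (v := fun y => g 0 + callSum (callWeight g K) K y)
    hK.monotone (hKs 0) hKtop (fun y hy hy0 => ?_) (fun m y hmy hym => ?_) hy
  · obtain rfl : y = 0 := le_antisymm (hK0 ▸ hy0) hy
    linarith [callSum_nonneg (K := K) (callWeight_nonneg hg hKs hK) 0]
  · rw [add_sub_add_left_eq_sub, callSum_sub_callSum hK.monotone hmy hym, callWeight,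
      sum_range_succ_increments]
    have hchord : g y ≤ g (K m) + chordSlope g K m * (y - K m) :=
      hg.le_add_slope_mul (hKs m) (hKs (m + 1)) hmy hym
    nlinarith [le_max_left (chordSlope g K m) 0]

lemma tendsto_chordSlope (hg : ConvexOn ℝ (Ici 0) g) (hgs : Tendsto (fun y => g y / y) atTop atTop)
    (hK0 : K 0 = 0) (hK : StrictMono K) (hKtop : Tendsto K atTop atTop) :
    Tendsto (chordSlope g K) atTop atTop := by
  have hKs := mem_Ici_zero_of_monotone hK.monotone hK0
  have hslope0 : Tendsto (slope g 0) atTop atTop :=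
    (tendsto_div_atTop_of_sub_le hgs (g 0) fun y _ => le_rfl).congr fun y => by
      rw [slope_def_field, sub_zero]
  refine tendsto_atTop_mono (fun n => ?_) (hslope0.comp (hKtop.comp (tendsto_add_atTop_nat 1)))
  have h := hg.slope_mono (hKs (n + 1)) ⟨hKs 0, (hK n.succ_pos).ne⟩
    ⟨hKs n, (hK n.lt_succ_self).ne⟩ (hK.monotone n.zero_le)
  rw [slope_comm, hK0] at h
  rwa [chordSlope, slope_comm]

lemma not_summable_callWeight (hg : ConvexOn ℝ (Ici 0) g)
    (hgs : Tendsto (fun y => g y / y) atTop atTop) (hK0 : K 0 = 0) (hK : StrictMono K)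
    (hKtop : Tendsto K atTop atTop) : ¬ Summable (callWeight g K) := by
  have hKs := mem_Ici_zero_of_monotone hK.monotone hK0
  rw [summable_iff_not_tendsto_nat_atTop_of_nonneg (callWeight_nonneg hg hKs hK), not_not,
    ← tendsto_add_atTop_iff_nat 1]
  simp only [callWeight, sum_range_succ_increments]
  exact tendsto_atTop_mono (fun n => le_max_left _ _) (tendsto_chordSlope hg hgs hK0 hK hKtop)

lemma callSum_callWeight_shift_le (hg : ConvexOn ℝ (Ici 0) g) (hK0 : K 0 = 0) (hK : StrictMono K)
    (hKtop : Tendsto K atTop atTop) {y : ℝ} (hy : 0 ≤ y) :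
    callSum (callWeight g K) (fun n => K (n + 1)) y ≤
      max (g y - g 0 - chordSlope g K 0 * y) 0 + max (chordSlope g K 0) 0 * y := by
  have hKs := mem_Ici_zero_of_monotone hK.monotone hK0
  have hKs' : Monotone fun n => K (n + 1) := fun a b h => hK.monotone (by omega)
  set s₀ := chordSlope g K 0
  have habove : ∀ z, K 1 ≤ z → g 0 + s₀ * z ≤ g z := fun z hz => by
    have h : g (K 1) + s₀ * (z - K 1) ≤ g z :=
      hg.add_slope_mul_le (hKs 0) (le_trans (hKs 1) hz) (hK zero_lt_one) hz
    have h' : (K 1 - K 0) * s₀ = g (K 1) - g (K 0) := sub_mul_slope g (K 0) (K 1)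
    rw [hK0] at h'
    linarith
  refine le_of_sub_le_sub_on_grid (u := callSum (callWeight g K) fun n => K (n + 1))
    (v := fun y => max (g y - g 0 - s₀ * y) 0 + max s₀ 0 * y) hKs' (hKs 1)
    (hKtop.comp (tendsto_add_atTop_nat 1))
    (fun y _ hy1 => ?_) (fun m y hmy hym => ?_) hy
  · rw [callSum_eq_zero_of_le hKs' hy1]
    positivity
  · rw [callSum_sub_callSum hKs' hmy hym, callWeight, sum_range_succ_increments]
    have hy : y ∈ Ici (0 : ℝ) := (hKs (m + 1)).trans hmy
    have hchord : g (K (m + 1)) + chordSlope g K m * (y - K (m + 1)) ≤ g y :=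
      hg.add_slope_mul_le (hKs m) hy (hK m.lt_succ_self) hmy
    have hs₀ : s₀ ≤ chordSlope g K m := monotone_chordSlope hg hKs hK m.zero_le
    have hnode := habove (K (m + 1)) (hK.monotone (by omega))
    rw [max_eq_left (a := g (K (m + 1)) - g 0 - s₀ * K (m + 1)) (by linarith)]
    have hw : max (chordSlope g K m) 0 ≤ chordSlope g K m - s₀ + max s₀ 0 :=
      max_le (by linarith [le_max_left s₀ 0]) (by linarith [le_max_right s₀ 0])
    nlinarith [mul_le_mul_of_nonneg_right hw (sub_nonneg.2 hmy),
      le_max_left (g y - g 0 - s₀ * y) 0]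

lemma summable_callWeight_mul_price {ν : Measure ℝ} [IsFiniteMeasure ν]
    (hsupp : ν (Iio 0) = 0) (hmom : Integrable (fun y => y) ν) (hg : ConvexOn ℝ (Ici 0) g)
    (hgi : Integrable g ν) (hK0 : K 0 = 0) (hK : StrictMono K) (hKtop : Tendsto K atTop atTop)
    (hhalf : ∀ n, price ν (K n) = 2 * price ν (K (n + 1))) :
    Summable fun n => callWeight g K n * price ν (K n) := by
  have hKs := mem_Ici_zero_of_monotone hK.monotone hK0
  have hKs' : Monotone fun n => K (n + 1) := fun a b h => hK.monotone (by omega)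
  have hKtop' := hKtop.comp (tendsto_add_atTop_nat 1)
  have hα := callWeight_nonneg hg hKs hK
  have hG : Integrable (fun y => max (g y - g 0 - chordSlope g K 0 * y) 0 +
      max (chordSlope g K 0) 0 * y) ν :=
    ((hgi.sub (integrable_const _)).sub (hmom.const_mul _)).pos_part.add (hmom.const_mul _)
  have hint : Integrable (callSum (callWeight g K) fun n => K (n + 1)) ν := by
    refine hG.mono' (monotone_callSum hα hKs' hKtop').measurable.aestronglyMeasurable ?_
    filter_upwards [measure_eq_zero_iff_ae_notMem.1 hsupp] with y hy
    rw [Real.norm_of_nonneg (callSum_nonneg hα y)]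
    exact callSum_callWeight_shift_le hg hK0 hK hKtop (not_lt.1 hy)
  refine (((integrable_callSum_iff hmom hα hKs' hKtop').1 hint).mul_left 2).congr fun n => ?_
  rw [hhalf n]
  ring

end CallWeight

theorem stmt11 (ν : Measure ℝ) [IsProbabilityMeasure ν] (hsupp : ν (Set.Iio 0) = 0)
    (hmom : Integrable (fun y => y) ν)
    (gbar : ℝ → ℝ) (hgc : ConvexOn ℝ (Set.Ici (0:ℝ)) gbar)
    (hgs : Tendsto (fun y => gbar y / y) atTop atTop)
    (hgi : Integrable gbar ν) :
    ∃ (c : ℝ) (α K : ℕ → ℝ),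
      (∀ n, 0 ≤ α n) ∧ StrictMono K ∧ Tendsto K atTop atTop ∧
      ¬ Summable α ∧
      Summable (fun n => α n * ∫ y, max (y - K n) 0 ∂ν) ∧
      ConvexOn ℝ (Set.Ici (0:ℝ))
        (fun y => ∑' n, α n * (max (y - K n) 0 - ∫ z, max (z - K n) 0 ∂ν)) ∧
      Tendsto (fun y =>
          (∑' n, α n * (max (y - K n) 0 - ∫ z, max (z - K n) 0 ∂ν)) / y) atTop atTop ∧
      Integrable (fun y => ∑' n, α n * (max (y - K n) 0 - ∫ z, max (z - K n) 0 ∂ν)) ν ∧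
      ∀ y : ℝ, 0 ≤ y → gbar y ≤ c + ∑' n, α n * max (y - K n) 0 := by
  obtain ⟨K, hK0, hK, hKtop, hsum⟩ : ∃ K : ℕ → ℝ, K 0 = 0 ∧ StrictMono K ∧
      Tendsto K atTop atTop ∧ Summable fun n => callWeight gbar K n * price ν (K n) := by
    by_cases hpos : ∀ k, 0 < price ν k
    · obtain ⟨K, hK0, hK, hKtop, hhalf⟩ := exists_strictMono_halving
        (lipschitzWith_price hmom).continuous (price_antitone hmom) hpos (tendsto_price_atTop hmom)
      exact ⟨K, hK0, hK, hKtop,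
        summable_callWeight_mul_price hsupp hmom hgc hgi hK0 hK hKtop hhalf⟩
    · obtain ⟨M, hM⟩ := not_forall.1 hpos
      refine ⟨Nat.cast, Nat.cast_zero, Nat.strictMono_cast, tendsto_natCast_atTop_atTop,
        (summable_nat_add_iff ⌈M⌉₊).1 (summable_zero.congr fun n => ?_)⟩
      rw [price_eq_zero_of_le hmom (not_lt.1 hM) ((Nat.le_ceil M).trans (by norm_cast; omega)), mul_zero]
  set α := callWeight gbar K
  have hα : ∀ n, 0 ≤ α n := callWeight_nonneg hgc (mem_Ici_zero_of_monotone hK.monotone hK0) hK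
  have hg₀ : ∀ y, ∑' n, α n * (max (y - K n) 0 - ∫ z, max (z - K n) 0 ∂ν) =
      callSum α K y - ∑' n, α n * price ν (K n) :=
    callSum_sub_tsum hK.monotone hKtop hsum
  refine ⟨gbar 0, α, K, hα, hK, hKtop, not_summable_callWeight hgc hgs hK0 hK hKtop, hsum,
    ?_, ?_, ?_, fun y hy => le_add_callSum_callWeight hgc hK0 hK hKtop hy⟩ <;> simp only [hg₀]
  · exact ((convexOn_callSum hα hK.monotone hKtop).subset (subset_univ _)
      (convex_Ici 0)).add_const _
  · exact tendsto_div_atTop_of_sub_le hgs (gbar 0 + ∑' n, α n * price ν (K n)) fun y hy => by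
      linarith [le_add_callSum_callWeight hgc hK0 hK hKtop hy]
  · exact ((integrable_callSum_iff hmom hα hK.monotone hKtop).2 hsum).sub (integrable_const _)
end

section
/- Let T ≥ 1 and let π be a Borel probability measure on [0,∞)^T such that each coordinate x_t is π-integrable and ∫ Σ_{t=0}^{T−1} Δ_t(x₁,…,x_t)·(x_{t+1} − x_t) dπ(x) = 0 for every family of bounded continuous functions Δ_t : [0,∞)^t → ℝ (with x₀ := S₀ a fixed constant). Then the canonical process (x_t)_{t=1}^T is a martingale under π with respect to its natural filtration. Conversely, every such martingale measure with integrable coordinates satisfies these integral conditions. -/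
/-! For a martingale, each term `Δ_t (x_t - x_{t-1})` of the gain has zero mean, because `Δ_t` is
bounded and `ℱ_{t-1}`-measurable. Conversely, strategies trading at a single time `t` give
`∫ φ(x_0, …, x_{t-1}) (x_t - x_{t-1}) dπ = 0` for every bounded continuous `φ`. Bounded continuous
functions determine finite Borel measures, so this extends to bounded measurable `φ`, in particular
to indicators of `ℱ_{t-1}`-events, which is the one-step martingale property; the tower property
does the rest, and the strategy holding one unit at time `0` gives `∫ x_0 dπ = S₀`. -/

open MeasureTheory

/-- The natural filtration of the canonical process on path space `Fin T → ℝ`. -/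
def natFiltration (T : ℕ) :
    Filtration (Fin T) (inferInstance : MeasurableSpace (Fin T → ℝ)) where
  seq t := ⨆ (s : Fin T) (_ : s ≤ t), MeasurableSpace.comap (fun x => x s) inferInstance
  mono' _ _ hij := iSup₂_le fun s hs => le_iSup₂_of_le s (hs.trans hij) le_rfl
  le' _ := iSup₂_le fun s _ => (measurable_pi_apply s).comap_le

open Preorder
open scoped BoundedContinuousFunction

section TestFunctions

variable {Ω E : Type*} [MeasurableSpace Ω] [mE : MeasurableSpace E] {μ : Measure Ω} {P : Ω → E}
  {f : Ω → ℝ}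

lemma integral_map_withDensity_ofReal (hP : Measurable P) (hf : AEMeasurable f μ) {g : E → ℝ}
    (hg : Measurable g) :
    ∫ y, g y ∂(μ.withDensity fun x => ENNReal.ofReal (f x)).map P =
      ∫ x, g (P x) * max (f x) 0 ∂μ := by
  rw [integral_map hP.aemeasurable hg.aestronglyMeasurable,
    integral_withDensity_eq_integral_toReal_smul₀ hf.ennreal_ofReal
      (ae_of_all _ fun _ => ENNReal.ofReal_lt_top)]
  simp only [ENNReal.toReal_ofReal', smul_eq_mul, mul_comm]

lemma integral_comp_mul_eq_sub_map_withDensity (hP : Measurable P) (hf : Integrable f μ)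
    {g : E → ℝ} (hg : Measurable g) {C : ℝ} (hgC : ∀ y, ‖g y‖ ≤ C) :
    ∫ x, g (P x) * f x ∂μ =
      ∫ y, g y ∂(μ.withDensity fun x => ENNReal.ofReal (f x)).map P -
        ∫ y, g y ∂(μ.withDensity fun x => ENNReal.ofReal (-f x)).map P := by
  have hgP : AEStronglyMeasurable (fun x => g (P x)) μ := (hg.comp hP).aestronglyMeasurable
  have hpos : Integrable (fun x => g (P x) * max (f x) 0) μ :=
    hf.pos_part.bdd_mul hgP (ae_of_all _ fun x => hgC (P x))
  have hneg : Integrable (fun x => g (P x) * max (-f x) 0) μ :=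
    hf.neg.pos_part.bdd_mul hgP (ae_of_all _ fun x => hgC (P x))
  rw [integral_map_withDensity_ofReal hP hf.aemeasurable hg,
    integral_map_withDensity_ofReal (f := fun x => -f x) hP hf.aemeasurable.neg hg,
    ← integral_sub hpos hneg]
  simp only [← mul_sub, max_zero_sub_max_neg_zero_eq_self]

variable [TopologicalSpace E] [HasOuterApproxClosed E] [BorelSpace E]

/-- `(f⁺ μ) ∘ P⁻¹` and `(f⁻ μ) ∘ P⁻¹` are finite measures with the same integrals against
`E →ᵇ ℝ`, hence equal. -/
lemma integral_comp_mul_eq_zero_of_forall_bcf (hP : Measurable P) (hf : Integrable f μ)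
    (h : ∀ φ : E →ᵇ ℝ, ∫ x, φ (P x) * f x ∂μ = 0) {g : E → ℝ} (hg : Measurable g) {C : ℝ}
    (hgC : ∀ y, ‖g y‖ ≤ C) :
    ∫ x, g (P x) * f x ∂μ = 0 := by
  have := isFiniteMeasure_withDensity_ofReal hf.2
  have := isFiniteMeasure_withDensity_ofReal hf.neg.2
  have hν : (μ.withDensity fun x => ENNReal.ofReal (f x)).map P =
      (μ.withDensity fun x => ENNReal.ofReal (-f x)).map P := by
    refine ext_of_forall_integral_eq_of_IsFiniteMeasure fun φ => ?_
    have := integral_comp_mul_eq_sub_map_withDensity hP hf φ.continuous.measurable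
      φ.norm_coe_le_norm
    rw [h φ] at this
    linarith
  rw [integral_comp_mul_eq_sub_map_withDensity hP hf hg hgC, hν, sub_self]

lemma condExp_comap_ae_eq_of_forall_bcf [IsFiniteMeasure μ] (hP : Measurable P) {g : Ω → ℝ}
    (hf : Integrable f μ) (hg : Integrable g μ)
    (hgm : StronglyMeasurable[mE.comap P] g)
    (h : ∀ φ : E →ᵇ ℝ, ∫ x, φ (P x) * (f x - g x) ∂μ = 0) :
    μ[f | mE.comap P] =ᵐ[μ] g := by
  refine (ae_eq_condExp_of_forall_setIntegral_eq hP.comap_le hf (fun _ _ _ => hg.integrableOn)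
    ?_ hgm.aestronglyMeasurable).symm
  rintro _ ⟨B, hB, rfl⟩ -
  have h0 := integral_comp_mul_eq_zero_of_forall_bcf hP (hf.sub hg) h
    (measurable_one.indicator hB) (C := 1) fun y => by by_cases hy : y ∈ B <;> simp [hy]
  have hB0 : ∫ x in P ⁻¹' B, (f x - g x) ∂μ = 0 := by
    rw [← integral_indicator (hP hB), ← h0]
    congr 1 with x
    by_cases hx : P x ∈ B <;> simp [hx]
  rw [integral_sub hf.integrableOn hg.integrableOn] at hB0
  linarith

end TestFunctions

section Martingale

variable {Ω ι E : Type*} {m0 : MeasurableSpace Ω} {μ : Measure Ω} [IsFiniteMeasure μ]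

lemma MeasureTheory.Martingale.integral_mul_sub_eq_zero [Preorder ι] {ℱ : Filtration ι m0}
    {X : ι → Ω → ℝ} (hX : Martingale X ℱ μ) {i j : ι} (hij : i ≤ j) {g : Ω → ℝ}
    (hg : StronglyMeasurable[ℱ i] g) {C : ℝ} (hgC : ∀ ω, ‖g ω‖ ≤ C) :
    ∫ ω, g ω * (X j ω - X i ω) ∂μ = 0 := by
  have hint := (hX.integrable j).sub (hX.integrable i)
  have hzero : μ[X j - X i | ℱ i] =ᵐ[μ] 0 := by
    filter_upwards [condExp_sub (hX.integrable j) (hX.integrable i) (ℱ i),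
      hX.condExp_ae_eq hij, hX.condExp_ae_eq (le_refl i)] with ω h hj hi
    simp [h, hj, hi]
  calc ∫ ω, g ω * (X j ω - X i ω) ∂μ = ∫ ω, μ[g * (X j - X i) | ℱ i] ω ∂μ :=
        (integral_condExp (ℱ.le i)).symm
    _ = ∫ ω, (g * μ[X j - X i | ℱ i]) ω ∂μ :=
        integral_congr_ae (condExp_stronglyMeasurable_mul_of_bound (ℱ.le i) hg hint C
          (ae_of_all _ hgC))
    _ = 0 := by
        rw [integral_congr_ae (hzero.mul_left (f₃ := g))]
        simp

lemma martingale_of_condExp_ae_eq_of_covBy [NormedAddCommGroup E] [NormedSpace ℝ E]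
    [CompleteSpace E] [PartialOrder ι] [SuccOrder ι] [IsSuccArchimedean ι] {ℱ : Filtration ι m0}
    {X : ι → Ω → E} (hadp : StronglyAdapted ℱ X) (hint : ∀ i, Integrable (X i) μ)
    (hX : ∀ i j, i ⋖ j → μ[X j | ℱ i] =ᵐ[μ] X i) :
    Martingale X ℱ μ := by
  refine ⟨hadp, fun i j hij => ?_⟩
  refine Succ.rec (.of_eq (condExp_of_stronglyMeasurable (ℱ.le i) (hadp i) (hint i)))
    (fun k hik ih => ?_) hij
  by_cases hk : IsMax k
  · rwa [Order.succ_eq_iff_isMax.mpr hk]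
  filter_upwards [(ℱ.condExp_condExp (X (Order.succ k)) hik).symm,
    condExp_congr_ae (m := ℱ i) (hX k _ (Order.covBy_succ_of_not_isMax hk)), ih]
    with ω h1 h2 h3
  rw [h1, h2, h3]

end Martingale

lemma DependsOn.measurable_piLE {ι Z : Type*} [Preorder ι] {X : ι → Type*}
    [∀ i, MeasurableSpace (X i)] [∀ i, Nonempty (X i)] [MeasurableSpace Z]
    {f : (Π i, X i) → Z} {i : ι} (hdep : DependsOn f (Set.Iic i)) (hf : Measurable f) :
    Measurable[Filtration.piLE i] f := by
  classical
  let x₀ : Π j, X j := fun _ => Classical.arbitrary _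
  let extend : (Π j : Set.Iic i, X j) → Π j, X j := fun b j =>
    if h : j ≤ i then b ⟨j, h⟩ else x₀ j
  have hextend : Measurable extend := by
    refine measurable_pi_lambda _ fun j => ?_
    by_cases h : j ≤ i
    · simpa [extend, h] using measurable_pi_apply (X := fun j : Set.Iic i => X j) ⟨j, h⟩
    · simp [extend, h]
  have hfac : f = (f ∘ extend) ∘ restrictLe i := by
    funext x
    exact hdep fun j (hj : j ≤ i) => by simp [extend, restrictLe, hj]
  rw [hfac]
  exact (hf.comp hextend).comp (comap_measurable _)

section PathSpace

variable {T : ℕ}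

lemma natFiltration_eq_piLE : natFiltration T = Filtration.piLE := by
  ext t : 2
  simp only [natFiltration, Filtration.piLE, MeasurableSpace.pi, MeasurableSpace.comap_iSup,
    MeasurableSpace.comap_comp]
  rw [iSup_subtype']
  rfl

lemma stronglyAdapted_natFiltration :
    StronglyAdapted (natFiltration T) fun t (x : Fin T → ℝ) => x t := by
  intro t
  have : Measurable[natFiltration T t] fun x : Fin T → ℝ => x t :=
    measurable_iff_comap_le.mpr (le_iSup₂_of_le t le_rfl le_rfl)
  exact this.stronglyMeasurable

def pathIncrement (S₀ : ℝ) (x : Fin T → ℝ) (t : Fin T) : ℝ :=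
  x t - if (t : ℕ) = 0 then S₀ else x ⟨(t : ℕ) - 1, lt_of_le_of_lt (Nat.sub_le _ _) t.isLt⟩

lemma pathIncrement_of_val_eq_zero {t : Fin T} (ht : (t : ℕ) = 0) (S₀ : ℝ) (x : Fin T → ℝ) :
    pathIncrement S₀ x t = x t - S₀ := by
  simp [pathIncrement, ht]

lemma pathIncrement_of_covBy {p t : Fin T} (hpt : p ⋖ t) (S₀ : ℝ) (x : Fin T → ℝ) :
    pathIncrement S₀ x t = x t - x p := by
  have ht : (t : ℕ) = p + 1 := (Nat.covBy_iff_add_one_eq.mp (Fin.covBy_iff.mp hpt)).symm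
  simp only [pathIncrement, ht, Nat.add_one_ne_zero, if_false, Nat.add_sub_cancel]

lemma integrable_pathIncrement {π : Measure (Fin T → ℝ)} [IsFiniteMeasure π]
    (hInt : ∀ t : Fin T, Integrable (fun x : Fin T → ℝ => x t) π) (S₀ : ℝ) (t : Fin T) :
    Integrable (fun x => pathIncrement S₀ x t) π := by
  unfold pathIncrement
  split_ifs
  · exact (hInt t).sub (integrable_const S₀)
  · exact (hInt t).sub (hInt _)

structure IsBoundedContinuousStrategy (Δ : ℕ → (Fin T → ℝ) → ℝ) : Prop where
  continuous : ∀ t, Continuous (Δ t)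
  bounded : ∀ t, ∃ C, ∀ x, |Δ t x| ≤ C
  dependsOn : ∀ t, DependsOn (Δ t) {s : Fin T | (s : ℕ) < t}

def gain (S₀ : ℝ) (Δ : ℕ → (Fin T → ℝ) → ℝ) (x : Fin T → ℝ) : ℝ :=
  ∑ t : Fin T, Δ t x * pathIncrement S₀ x t

variable {π : Measure (Fin T → ℝ)} {S₀ : ℝ}

lemma integral_mul_pathIncrement_eq_zero_of_martingale
    [IsProbabilityMeasure π] (hM : Martingale (fun t (x : Fin T → ℝ) => x t) (natFiltration T) π)
    (hT : 0 < T) (hS : ∫ x, x ⟨0, hT⟩ ∂π = S₀) {Δ : ℕ → (Fin T → ℝ) → ℝ}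
    (hΔ : IsBoundedContinuousStrategy Δ) (t : Fin T) :
    ∫ x, Δ t x * pathIncrement S₀ x t ∂π = 0 := by
  rcases Nat.eq_zero_or_pos t with ht | ht
  · have hconst : ∀ x, Δ t x = Δ t 0 := fun x => hΔ.dependsOn t fun s hs => by
      simp [ht] at hs
    obtain rfl : t = ⟨0, hT⟩ := Fin.ext ht
    simp_rw [hconst, pathIncrement_of_val_eq_zero ht, integral_const_mul,
      integral_sub (hM.integrable _) (integrable_const S₀), hS]
    simp
  · obtain ⟨C, hC⟩ := hΔ.bounded t
    let p : Fin T := ⟨t - 1, by omega⟩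
    have hpt : p ⋖ t := Fin.covBy_iff.mpr (Nat.covBy_iff_add_one_eq.mpr (by simp [p]; omega))
    have hmeas : StronglyMeasurable[natFiltration T p] (Δ t) := by
      rw [natFiltration_eq_piLE]
      exact (((hΔ.dependsOn t).mono fun s (hs : s < t) => hpt.le_of_lt hs).measurable_piLE
        (hΔ.continuous t).measurable).stronglyMeasurable
    simp_rw [pathIncrement_of_covBy hpt]
    exact hM.integral_mul_sub_eq_zero hpt.le hmeas fun x => (Real.norm_eq_abs _).trans_le (hC x)

lemma integral_gain_eq_zero_of_martingale
    [IsProbabilityMeasure π] (hM : Martingale (fun t (x : Fin T → ℝ) => x t) (natFiltration T) π)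
    (hT : 0 < T) (hS : ∫ x, x ⟨0, hT⟩ ∂π = S₀) {Δ : ℕ → (Fin T → ℝ) → ℝ}
    (hΔ : IsBoundedContinuousStrategy Δ) :
    ∫ x, gain S₀ Δ x ∂π = 0 := by
  have hterm (t : Fin T) : Integrable (fun x => Δ t x * pathIncrement S₀ x t) π := by
    obtain ⟨C, hC⟩ := hΔ.bounded t
    exact (integrable_pathIncrement hM.integrable S₀ t).bdd_mul
      (hΔ.continuous t).aestronglyMeasurable
      (ae_of_all _ fun x => (Real.norm_eq_abs _).trans_le (hC x))
  simp only [gain]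
  rw [integral_finsetSum _ fun t _ => hterm t]
  exact Finset.sum_eq_zero fun t _ =>
    integral_mul_pathIncrement_eq_zero_of_martingale hM hT hS hΔ t

lemma integral_mul_pathIncrement_eq_zero_of_forall_gain
    (hgain : ∀ Δ, IsBoundedContinuousStrategy Δ → ∫ x, gain S₀ Δ x ∂π = 0) (t : Fin T)
    {h : (Fin T → ℝ) → ℝ} (hc : Continuous h) (hb : ∃ C, ∀ x, |h x| ≤ C)
    (hdep : DependsOn h {s : Fin T | (s : ℕ) < t}) :
    ∫ x, h x * pathIncrement S₀ x t ∂π = 0 := by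
  let Δ : ℕ → (Fin T → ℝ) → ℝ := fun m x => if m = t then h x else 0
  have hΔ : IsBoundedContinuousStrategy Δ := by
    refine ⟨fun m => ?_, fun m => ?_, fun m => ?_⟩ <;> by_cases hm : m = (t : ℕ)
    · simpa [Δ, hm] using hc
    · simpa [Δ, hm] using continuous_const
    · simpa [Δ, hm] using hb
    · exact ⟨0, by simp [Δ, hm]⟩
    · simpa [Δ, hm] using hdep
    · simpa [Δ, hm] using (dependsOn_const (0 : ℝ)).mono (Set.empty_subset _)
  simpa [gain, Δ, Fin.val_inj] using hgain Δ hΔ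

lemma condExp_eval_ae_eq_of_forall_gain [IsFiniteMeasure π]
    (hInt : ∀ t : Fin T, Integrable (fun x => x t) π)
    (hgain : ∀ Δ, IsBoundedContinuousStrategy Δ → ∫ x, gain S₀ Δ x ∂π = 0) {p t : Fin T}
    (hpt : p ⋖ t) :
    π[fun x => x t | natFiltration T p] =ᵐ[π] fun x => x p := by
  have hp := stronglyAdapted_natFiltration (T := T) p
  rw [natFiltration_eq_piLE] at hp ⊢
  refine condExp_comap_ae_eq_of_forall_bcf (measurable_restrictLe p) (hInt t) (hInt p) hp
    fun φ => ?_
  simp_rw [← pathIncrement_of_covBy hpt S₀]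
  refine integral_mul_pathIncrement_eq_zero_of_forall_gain hgain t
    (φ.continuous.comp (continuous_pi fun _ => continuous_apply _))
    ⟨‖φ‖, fun x => φ.norm_coe_le_norm _⟩
    fun x y hxy => congrArg φ (funext fun s => hxy s (s.2.trans_lt hpt.lt))

lemma integral_eval_zero_eq_of_forall_gain [IsProbabilityMeasure π] (hT : 0 < T)
    (hInt : ∀ t : Fin T, Integrable (fun x => x t) π)
    (hgain : ∀ Δ, IsBoundedContinuousStrategy Δ → ∫ x, gain S₀ Δ x ∂π = 0) :
    ∫ x, x ⟨0, hT⟩ ∂π = S₀ := by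
  have h := integral_mul_pathIncrement_eq_zero_of_forall_gain hgain ⟨0, hT⟩ continuous_const
    ⟨1, fun _ => le_of_eq abs_one⟩ (dependsOn_const (1 : ℝ) |>.mono (Set.empty_subset _))
  simp_rw [one_mul, pathIncrement_of_val_eq_zero (t := ⟨0, hT⟩) rfl,
    integral_sub (hInt _) (integrable_const S₀)] at h
  simp only [integral_const, probReal_univ, one_smul] at h
  linarith

end PathSpace

theorem stmt12_general (T : ℕ) (hT : 0 < T) (S₀ : ℝ)
    (π : Measure (Fin T → ℝ)) [IsProbabilityMeasure π] :
    (Martingale (fun (t : Fin T) (x : Fin T → ℝ) => x t) (natFiltration T) π ∧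
        (∫ x : Fin T → ℝ, x ⟨0, hT⟩ ∂π) = S₀) ↔
      ((∀ t : Fin T, Integrable (fun x : Fin T → ℝ => x t) π) ∧
        ∀ Δ : ℕ → (Fin T → ℝ) → ℝ,
          (∀ t, Continuous (Δ t)) →
          (∀ t, ∃ C, ∀ x, |Δ t x| ≤ C) →
          (∀ t, ∀ x y : Fin T → ℝ, (∀ s : Fin T, (s : ℕ) < t → x s = y s) → Δ t x = Δ t y) →
          (∫ x : Fin T → ℝ, ∑ t : Fin T,
              Δ (t : ℕ) x *
                (x t - if (t : ℕ) = 0 then S₀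
                  else x ⟨(t : ℕ) - 1, lt_of_le_of_lt (Nat.sub_le _ _) t.isLt⟩) ∂π) = 0) := by
  constructor
  · rintro ⟨hM, hS⟩
    exact ⟨hM.integrable, fun Δ hc hb hdep =>
      integral_gain_eq_zero_of_martingale hM hT hS ⟨hc, hb, hdep⟩⟩
  · rintro ⟨hInt, hgain⟩
    replace hgain : ∀ Δ, IsBoundedContinuousStrategy Δ → ∫ x, gain S₀ Δ x ∂π = 0 :=
      fun Δ hΔ => hgain Δ hΔ.continuous hΔ.bounded hΔ.dependsOn
    exact ⟨martingale_of_condExp_ae_eq_of_covBy stronglyAdapted_natFiltration hInt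
        fun _ _ => condExp_eval_ae_eq_of_forall_gain hInt hgain,
      integral_eval_zero_eq_of_forall_gain hT hInt hgain⟩

theorem stmt12 (T : ℕ) (hT : 0 < T) (S₀ : ℝ)
    (π : Measure (Fin T → ℝ)) [IsProbabilityMeasure π]
    (hsupp : π {x | ∃ t, x t < 0} = 0) :
    (Martingale (fun (t : Fin T) (x : Fin T → ℝ) => x t) (natFiltration T) π ∧
        (∫ x : Fin T → ℝ, x ⟨0, hT⟩ ∂π) = S₀) ↔
      ((∀ t : Fin T, Integrable (fun x : Fin T → ℝ => x t) π) ∧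
        ∀ Δ : ℕ → (Fin T → ℝ) → ℝ,
          (∀ t, Continuous (Δ t)) →
          (∀ t, ∃ C, ∀ x, |Δ t x| ≤ C) →
          (∀ t, ∀ x y : Fin T → ℝ, (∀ s : Fin T, (s : ℕ) < t → x s = y s) → Δ t x = Δ t y) →
          (∫ x : Fin T → ℝ, ∑ t : Fin T,
              Δ (t : ℕ) x *
                (x t - if (t : ℕ) = 0 then S₀
                  else x ⟨(t : ℕ) - 1, lt_of_le_of_lt (Nat.sub_le _ _) t.isLt⟩) ∂π) = 0) :=
  stmt12_general T hT S₀ π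
end
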